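/- Let {e₁,…,eₙ} be the standard basis of Kⁿ and let W = span_K(w₁,…,w_d) and W' = span_K(w'₁,…,w'_d) be two K-subspaces of Kⁿ of dimension d such that w_j, w'_j ∈ e_j + ({0}^d × 𝔪^{n−d}) for j = 1,…,d. Then Δ(W, W') = max_j v(w_j − w'_j). -/
import Mathlib


noncomputable section

open scoped Classical Pointwise

section Preamble

variable {K : Type*} [Field K] {Γ : Type*} [LinearOrderedCommGroupWithZero Γ]

instance (priority := 100) : OrderBot Γ where
  bot := 0
  bot_le _ := zero_le'

/-- The max-valuation on `K^n`: `v(a) = maxᵢ v(aᵢ)`. -/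
def vv (v : Valuation K Γ) {n : ℕ} (x : Fin n → K) : Γ :=
  Finset.univ.sup fun i => v (x i)

/-- `rvEq v x y` expresses `rv(x) = rv(y)` in `RV⁽ⁿ⁾ = Kⁿ/∼`, where
`x ∼ y` iff `v(x−y) < v(x)` or `x = y = 0`. -/
def rvEq (v : Valuation K Γ) {n : ℕ} (x y : Fin n → K) : Prop :=
  vv v (x - y) < vv v x ∨ (x = 0 ∧ y = 0)

/-- Balls in `K` (with `K` itself counting as a ball). -/
def IsBall1 (v : Valuation K Γ) (B : Set K) : Prop :=
  B = Set.univ ∨ ∃ a : K, ∃ γ : Γ, γ ≠ 0 ∧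
    (B = {x | v (x - a) < γ} ∨ B = {x | v (x - a) ≤ γ})

/-- Balls in `Kⁿ` (with `Kⁿ` itself counting as a ball). -/
def IsBall (v : Valuation K Γ) {n : ℕ} (B : Set (Fin n → K)) : Prop :=
  B = Set.univ ∨ ∃ a : Fin n → K, ∃ γ : Γ, γ ≠ 0 ∧
    (B = {x | vv v (x - a) < γ} ∨ B = {x | vv v (x - a) ≤ γ})

/-- Spherical completeness: every nonempty chain of balls in `K` has nonempty
intersection. -/
def SphericallyComplete (v : Valuation K Γ) : Prop :=
  ∀ C : Set (Set K), C.Nonempty → (∀ B ∈ C, IsBall1 v B) → IsChain (· ⊆ ·) C →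
    (⋂ B ∈ C, B).Nonempty

/-- The residue field `K̄` of the valuation ring `𝒪 = {x | v x ≤ 1}`. -/
def Kbar (v : Valuation K Γ) : Type _ :=
  IsLocalRing.ResidueField v.valuationSubring

instance (v : Valuation K Γ) : Field (Kbar v) :=
  inferInstanceAs (Field (IsLocalRing.ResidueField v.valuationSubring))

/-- The residue map `res : 𝒪 → K̄`, extended by the junk value `0` outside `𝒪`. -/
def res' (v : Valuation K Γ) (x : K) : Kbar v :=
  if h : v x ≤ 1 then IsLocalRing.residue v.valuationSubring ⟨x, h⟩ else 0

/-- The coordinatewise residue map on `Kⁿ`. -/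
def resv (v : Valuation K Γ) {n : ℕ} (x : Fin n → K) : Fin n → Kbar v :=
  fun i => res' v (x i)

/-- `res(S)` for a set `S ⊆ Kⁿ`: the set of residues of points of `S ∩ 𝒪ⁿ`. -/
def resSet (v : Valuation K Γ) {n : ℕ} (S : Set (Fin n → K)) : Set (Fin n → Kbar v) :=
  resv v '' {x ∈ S | ∀ i, v (x i) ≤ 1}

/-- `dir(x) = res(K·x) ⊆ K̄ⁿ`. -/
def dirSet (v : Valuation K Γ) {n : ℕ} (x : Fin n → K) : Set (Fin n → Kbar v) :=
  resSet v {y | ∃ c : K, y = c • x}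

/-- The coordinate projection `Kⁿ → K^d` selecting the coordinates `σ 0 < σ 1 < ⋯`. -/
def proj {A : Type*} {n d : ℕ} (σ : Fin d → Fin n) (x : Fin n → A) : Fin d → A :=
  fun k => x (σ k)

/-- `σ` (a strictly increasing selection of `d` of the `n` coordinates) is an
exhibition of the `K̄`-subspace `Ū ⊆ K̄ⁿ` if the corresponding coordinate projection
`K̄ⁿ → K̄^d` restricts to an isomorphism from `Ū` onto `K̄^d`. -/
def IsExhibition (v : Valuation K Γ) {n d : ℕ} (σ : Fin d → Fin n)
    (Ubar : Submodule (Kbar v) (Fin n → Kbar v)) : Prop :=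
  StrictMono σ ∧ Set.BijOn (proj σ) (Ubar : Set (Fin n → Kbar v)) Set.univ

/-- `affdir(C)`: the `K̄`-subspace of `K̄ⁿ` generated by all `dir(x − x')`, `x, x' ∈ C`. -/
def affdir (v : Valuation K Γ) {n : ℕ} (C : Set (Fin n → K)) :
    Submodule (Kbar v) (Fin n → Kbar v) :=
  Submodule.span (Kbar v) (⋃ x ∈ C, ⋃ x' ∈ C, dirSet v (x - x'))

/-- A matrix has entries in the valuation ring `𝒪`. -/
def EntriesInO (v : Valuation K Γ) {n : ℕ} (M : Matrix (Fin n) (Fin n) K) : Prop :=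
  ∀ i j, v (M i j) ≤ 1

/-- `M ∈ GLₙ(𝒪)`: `M` is invertible, with entries in `𝒪`, and its inverse also has
entries in `𝒪`. -/
def MemGLO (v : Valuation K Γ) {n : ℕ} (M : Matrix (Fin n) (Fin n) K) : Prop :=
  EntriesInO v M ∧ ∃ N : Matrix (Fin n) (Fin n) K,
    M * N = 1 ∧ N * M = 1 ∧ EntriesInO v N

/-- The entrywise residue matrix of `M`. -/
def resM (v : Valuation K Γ) {n : ℕ} (M : Matrix (Fin n) (Fin n) K) :
    Matrix (Fin n) (Fin n) (Kbar v) :=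
  fun i j => res' v (M i j)

/-- `DeltaLE v U W γ` expresses `Δ(U, W) ≤ γ`: for every `u ∈ U` there is `w ∈ W`
with `v(u − w) ≤ v(u)·γ`. -/
def DeltaLE (v : Valuation K Γ) {n : ℕ} (U W : Submodule K (Fin n → K)) (γ : Γ) : Prop :=
  ∀ u ∈ U, ∃ w ∈ W, vv v (u - w) ≤ vv v u * γ

/-- `IsDelta v U W γ` expresses `Δ(U, W) = γ`: `γ` is the minimum of all admissible
bounds. -/
def IsDelta (v : Valuation K Γ) {n : ℕ} (U W : Submodule K (Fin n → K)) (γ : Γ) : Prop :=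
  DeltaLE v U W γ ∧ ∀ δ : Γ, DeltaLE v U W δ → γ ≤ δ

end Preamble

variable {K : Type*} [Field K] {Γ : Type*} [LinearOrderedCommGroupWithZero Γ]

lemma vv_le (v : Valuation K Γ) {n : ℕ} {x : Fin n → K} {γ : Γ}
    (h : ∀ i, v (x i) ≤ γ) : vv v x ≤ γ :=
  Finset.sup_le fun i _ => h i

lemma le_vv (v : Valuation K Γ) {n : ℕ} (x : Fin n → K) (i : Fin n) :
    v (x i) ≤ vv v x :=
  Finset.le_sup (f := fun i => v (x i)) (Finset.mem_univ i)

lemma combo_coord (v : Valuation K Γ) {n d : ℕ} (hdn : d ≤ n)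
    {w : Fin d → Fin n → K}
    (hw : ∀ j : Fin d, ∀ k : Fin n,
      (k : ℕ) < d → w j k = if (k : ℕ) = (j : ℕ) then 1 else 0)
    (c : Fin d → K) (i : Fin d) :
    (∑ j, c j • w j) (Fin.castLE hdn i) = c i := by
  rw [Finset.sum_apply]
  have : ∀ j : Fin d, (c j • w j) (Fin.castLE hdn i) = if j = i then c j else 0 := by
    intro j
    rw [Pi.smul_apply, smul_eq_mul, hw j _ (by simpa using i.2)]
    simp [Fin.val_eq_val, eq_comm]
  simp_rw [this]
  simp

lemma vv_sum_smul_le (v : Valuation K Γ) {n d : ℕ} (c : Fin d → K)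
    (y : Fin d → Fin n → K) :
    vv v (∑ j, c j • y j) ≤ (Finset.univ.sup fun j => v (c j)) *
      (Finset.univ.sup fun j => vv v (y j)) := by
  apply vv_le
  intro k
  rw [Finset.sum_apply]
  apply Valuation.map_sum_le
  intro j _
  rw [Pi.smul_apply, smul_eq_mul, v.map_mul]
  exact mul_le_mul' (Finset.le_sup (f := fun j => v (c j)) (Finset.mem_univ j))
    (le_trans (le_vv v (y j) k) (Finset.le_sup (f := fun j => vv v (y j)) (Finset.mem_univ j)))

/-- the distance between two subspaces spanned by bases of the form
`wⱼ, w'ⱼ ∈ eⱼ + ({0}^d × 𝔪^{n−d})` equals `maxⱼ v(wⱼ − w'ⱼ)`. -/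
theorem delta_of_nice_bases
    (v : Valuation K Γ) {n d : ℕ} (hdn : d ≤ n)
    (w w' : Fin d → Fin n → K)
    (hw : ∀ j : Fin d, ∀ k : Fin n,
      ((k : ℕ) < d → w j k = if (k : ℕ) = (j : ℕ) then 1 else 0) ∧
      (d ≤ (k : ℕ) → v (w j k) < 1))
    (hw' : ∀ j : Fin d, ∀ k : Fin n,
      ((k : ℕ) < d → w' j k = if (k : ℕ) = (j : ℕ) then 1 else 0) ∧
      (d ≤ (k : ℕ) → v (w' j k) < 1)) :
    IsDelta v (Submodule.span K (Set.range w)) (Submodule.span K (Set.range w'))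
      (Finset.univ.sup fun j => vv v (w j - w' j)) := by
  have hw1 : ∀ j : Fin d, ∀ k : Fin n,
      (k : ℕ) < d → w j k = if (k : ℕ) = (j : ℕ) then 1 else 0 := fun j k h => (hw j k).1 h
  have hw1' : ∀ j : Fin d, ∀ k : Fin n,
      (k : ℕ) < d → w' j k = if (k : ℕ) = (j : ℕ) then 1 else 0 := fun j k h => (hw' j k).1 h
  constructor
  · -- DeltaLE
    intro u hu
    rw [Submodule.mem_span_range_iff_exists_fun] at hu
    obtain ⟨c, hc⟩ := hu
    refine ⟨∑ j, c j • w' j, Submodule.sum_mem _ fun j _ =>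
      Submodule.smul_mem _ _ (Submodule.subset_span (Set.mem_range_self j)), ?_⟩
    have hdiff : u - (∑ j, c j • w' j) = ∑ j, c j • (w j - w' j) := by
      rw [← hc, ← Finset.sum_sub_distrib]
      congr 1; funext j; rw [smul_sub]
    rw [hdiff]
    refine le_trans (vv_sum_smul_le v c _) ?_
    apply mul_le_mul'
    · apply Finset.sup_le
      intro j _
      have : u (Fin.castLE hdn j) = c j := by rw [← hc]; exact combo_coord v hdn hw1 c j
      rw [← this]
      exact le_vv v u _
    · exact le_rfl
  · -- minimality
    intro δ hδ
    apply Finset.sup_le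
    intro j _
    obtain ⟨x, hx, hle⟩ := hδ (w j) (Submodule.subset_span (Set.mem_range_self j))
    have hvwj : vv v (w j) = 1 := by
      apply le_antisymm
      · apply vv_le
        intro k
        rcases lt_or_ge (k : ℕ) d with hk | hk
        · rw [hw1 j k hk]; split <;> simp
        · exact le_of_lt ((hw j k).2 hk)
      · have h1 : w j (Fin.castLE hdn j) = 1 := by
          rw [hw1 j _ (by simpa using j.2)]; simp
        calc (1 : Γ) = v (w j (Fin.castLE hdn j)) := by rw [h1]; simp
          _ ≤ vv v (w j) := le_vv v _ _
    rw [hvwj, one_mul] at hle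
    rw [Submodule.mem_span_range_iff_exists_fun] at hx
    obtain ⟨c, hc⟩ := hx
    set e : Fin d → K := fun i => if (i : ℕ) = (j : ℕ) then 1 else 0 with he
    have hce : ∀ i : Fin d, v (c i - e i) ≤ δ := by
      intro i
      have h1 : (w j - x) (Fin.castLE hdn i) = e i - c i := by
        have hxi : x (Fin.castLE hdn i) = c i := by
          rw [← hc]; exact combo_coord v hdn hw1' c i
        have hwi : w j (Fin.castLE hdn i) = e i := by
          rw [hw1 j _ (by simpa using i.2)]; simp [he]
        simp [hwi, hxi]
      have := le_trans (le_vv v (w j - x) (Fin.castLE hdn i)) hle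
      rwa [h1, Valuation.map_sub_swap] at this
    have hwje : w' j = ∑ i, e i • w' i := by
      rw [he]
      simp only [ite_smul, one_smul, zero_smul, Fin.val_eq_val]
      rw [Finset.sum_ite_eq' Finset.univ j (fun i => w' i)]
      simp
    have hxw : x - w' j = ∑ i, (c i - e i) • w' i := by
      rw [← hc, hwje, ← Finset.sum_sub_distrib]
      congr 1; funext i; rw [sub_smul]
    apply vv_le
    intro k
    rcases lt_or_ge (k : ℕ) d with hk | hk
    · have : (w j - w' j) k = 0 := by
        simp [hw1 j k hk, hw1' j k hk]
      rw [this]; simp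
    · have hxk : v ((x - w' j) k) ≤ δ := by
        rw [hxw, Finset.sum_apply]
        apply Valuation.map_sum_le
        intro i _
        rw [Pi.smul_apply, smul_eq_mul, v.map_mul]
        calc v (c i - e i) * v (w' i k) ≤ δ * 1 :=
              mul_le_mul' (hce i) (le_of_lt ((hw' i k).2 hk))
          _ = δ := mul_one δ
      have hsplit : (w j - w' j) k = (w j - x) k + (x - w' j) k := by
        simp
      rw [hsplit]
      refine le_trans (v.map_add _ _) (max_le ?_ hxk)
      exact le_trans (le_vv v (w j - x) k) hle

end
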